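/- Let 𝓙 = [[𝓙₁,𝓙₂],[𝓙₃,𝓙₄]] be a generalized complex structure on a finite-dimensional real vector space V. Then 𝓙 is B-complex if and only if 𝓙₂ = 0, and 𝓙 is β-complex if and only if 𝓙₃ = 0. -/
import Mathlib


open Module LinearMap

noncomputable def gcPair (V : Type*) [AddCommGroup V] [Module ℝ V]
    (x y : V × Module.Dual ℝ V) : ℝ :=
  -(1/2) * (x.2 y.1 + y.2 x.1)

noncomputable def IsGCS (V : Type*) [AddCommGroup V] [Module ℝ V]
    (J : (V × Module.Dual ℝ V) →ₗ[ℝ] (V × Module.Dual ℝ V)) : Prop :=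
  J ∘ₗ J = -LinearMap.id ∧ ∀ x y, gcPair V (J x) (J y) = gcPair V x y

section Blocks

variable (V : Type*) [AddCommGroup V] [Module ℝ V]

noncomputable def blk1 (J : (V × Module.Dual ℝ V) →ₗ[ℝ] (V × Module.Dual ℝ V)) :
    V →ₗ[ℝ] V :=
  (LinearMap.fst ℝ V (Module.Dual ℝ V)) ∘ₗ J ∘ₗ (LinearMap.inl ℝ V (Module.Dual ℝ V))

noncomputable def blk2 (J : (V × Module.Dual ℝ V) →ₗ[ℝ] (V × Module.Dual ℝ V)) :
    Module.Dual ℝ V →ₗ[ℝ] V :=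
  (LinearMap.fst ℝ V (Module.Dual ℝ V)) ∘ₗ J ∘ₗ (LinearMap.inr ℝ V (Module.Dual ℝ V))

noncomputable def blk3 (J : (V × Module.Dual ℝ V) →ₗ[ℝ] (V × Module.Dual ℝ V)) :
    V →ₗ[ℝ] Module.Dual ℝ V :=
  (LinearMap.snd ℝ V (Module.Dual ℝ V)) ∘ₗ J ∘ₗ (LinearMap.inl ℝ V (Module.Dual ℝ V))

noncomputable def blk4 (J : (V × Module.Dual ℝ V) →ₗ[ℝ] (V × Module.Dual ℝ V)) :
    Module.Dual ℝ V →ₗ[ℝ] Module.Dual ℝ V :=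
  (LinearMap.snd ℝ V (Module.Dual ℝ V)) ∘ₗ J ∘ₗ (LinearMap.inr ℝ V (Module.Dual ℝ V))

/-- The endomorphism of `V ⊕ V*` with block matrix `[[A,B],[C,D]]`. -/
noncomputable def ofBlocks (A : V →ₗ[ℝ] V) (B : Module.Dual ℝ V →ₗ[ℝ] V)
    (C : V →ₗ[ℝ] Module.Dual ℝ V) (D : Module.Dual ℝ V →ₗ[ℝ] Module.Dual ℝ V) :
    (V × Module.Dual ℝ V) →ₗ[ℝ] (V × Module.Dual ℝ V) :=
  LinearMap.prod
    (A ∘ₗ LinearMap.fst ℝ V (Module.Dual ℝ V) + B ∘ₗ LinearMap.snd ℝ V (Module.Dual ℝ V))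
    (C ∘ₗ LinearMap.fst ℝ V (Module.Dual ℝ V) + D ∘ₗ LinearMap.snd ℝ V (Module.Dual ℝ V))

/-- Skew-symmetry for a map `V → V*`. -/
def SkewF (B : V →ₗ[ℝ] Module.Dual ℝ V) : Prop := ∀ u v : V, B u v = -(B v u)

/-- Skew-symmetry for a map `V* → V`. -/
def SkewB (β : Module.Dual ℝ V →ₗ[ℝ] V) : Prop :=
  ∀ f g : Module.Dual ℝ V, f (β g) = -(g (β f))

/-- The B-field automorphism `[[1,0],[B,1]]`. -/
noncomputable def calB (B : V →ₗ[ℝ] Module.Dual ℝ V) :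
    (V × Module.Dual ℝ V) →ₗ[ℝ] (V × Module.Dual ℝ V) :=
  ofBlocks V LinearMap.id 0 B LinearMap.id

/-- The β-field automorphism `[[1,β],[0,1]]`. -/
noncomputable def calBeta (β : Module.Dual ℝ V →ₗ[ℝ] V) :
    (V × Module.Dual ℝ V) →ₗ[ℝ] (V × Module.Dual ℝ V) :=
  ofBlocks V LinearMap.id β 0 LinearMap.id

/-- A GCS is complex if it equals `[[J,0],[0,-J*]]` for a complex structure `J` on `V`. -/
noncomputable def IsComplexGCS (J : (V × Module.Dual ℝ V) →ₗ[ℝ] (V × Module.Dual ℝ V)) :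
    Prop :=
  ∃ Jc : V →ₗ[ℝ] V, Jc ∘ₗ Jc = -LinearMap.id ∧
    J = ofBlocks V Jc 0 0 (-(Jc.dualMap))

/-- A GCS is symplectic if it equals `[[0,-ω⁻¹],[ω,0]]` for a nondegenerate
skew-symmetric `ω : V → V*`. -/
noncomputable def IsSymplecticGCS (J : (V × Module.Dual ℝ V) →ₗ[ℝ] (V × Module.Dual ℝ V)) :
    Prop :=
  ∃ (ω : V →ₗ[ℝ] Module.Dual ℝ V) (ω' : Module.Dual ℝ V →ₗ[ℝ] V),
    SkewF V ω ∧ ω' ∘ₗ ω = LinearMap.id ∧ ω ∘ₗ ω' = LinearMap.id ∧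
      J = ofBlocks V 0 (-ω') ω 0

/-- B-field transform of a complex GCS. -/
noncomputable def IsBComplex (J : (V × Module.Dual ℝ V) →ₗ[ℝ] (V × Module.Dual ℝ V)) :
    Prop :=
  ∃ B : V →ₗ[ℝ] Module.Dual ℝ V, SkewF V B ∧
    ∃ J₀, IsComplexGCS V J₀ ∧ J = calB V B ∘ₗ J₀ ∘ₗ calB V (-B)

/-- β-field transform of a complex GCS. -/
noncomputable def IsBetaComplex (J : (V × Module.Dual ℝ V) →ₗ[ℝ] (V × Module.Dual ℝ V)) :
    Prop :=
  ∃ β : Module.Dual ℝ V →ₗ[ℝ] V, SkewB V β ∧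
    ∃ J₀, IsComplexGCS V J₀ ∧ J = calBeta V β ∘ₗ J₀ ∘ₗ calBeta V (-β)

/-- B-field transform of a symplectic GCS. -/
noncomputable def IsBSymplectic (J : (V × Module.Dual ℝ V) →ₗ[ℝ] (V × Module.Dual ℝ V)) :
    Prop :=
  ∃ B : V →ₗ[ℝ] Module.Dual ℝ V, SkewF V B ∧
    ∃ J₀, IsSymplecticGCS V J₀ ∧ J = calB V B ∘ₗ J₀ ∘ₗ calB V (-B)

/-- β-field transform of a symplectic GCS. -/
noncomputable def IsBetaSymplectic (J : (V × Module.Dual ℝ V) →ₗ[ℝ] (V × Module.Dual ℝ V)) :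
    Prop :=
  ∃ β : Module.Dual ℝ V →ₗ[ℝ] V, SkewB V β ∧
    ∃ J₀, IsSymplecticGCS V J₀ ∧ J = calBeta V β ∘ₗ J₀ ∘ₗ calBeta V (-β)

end Blocks

section ProofAux

variable {V : Type*} [AddCommGroup V] [Module ℝ V]

lemma ofBlocks_apply (A : V →ₗ[ℝ] V) (B : Module.Dual ℝ V →ₗ[ℝ] V)
    (C : V →ₗ[ℝ] Module.Dual ℝ V) (D : Module.Dual ℝ V →ₗ[ℝ] Module.Dual ℝ V)
    (x : V × Module.Dual ℝ V) :
    ofBlocks V A B C D x = (A x.1 + B x.2, C x.1 + D x.2) := rfl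

lemma apply_inl (J : (V × Module.Dual ℝ V) →ₗ[ℝ] (V × Module.Dual ℝ V)) (v : V) :
    J (v, 0) = (blk1 V J v, blk3 V J v) := rfl

lemma apply_inr (J : (V × Module.Dual ℝ V) →ₗ[ℝ] (V × Module.Dual ℝ V))
    (f : Module.Dual ℝ V) :
    J (0, f) = (blk2 V J f, blk4 V J f) := rfl

lemma J_apply (J : (V × Module.Dual ℝ V) →ₗ[ℝ] (V × Module.Dual ℝ V)) (v : V)
    (f : Module.Dual ℝ V) :
    J (v, f) = (blk1 V J v + blk2 V J f, blk3 V J v + blk4 V J f) := by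
  have hsplit : ((v, f) : V × Module.Dual ℝ V) = (v, 0) + (0, f) := by simp
  rw [hsplit, map_add, apply_inl, apply_inr]
  rfl

lemma sq_apply {J : (V × Module.Dual ℝ V) →ₗ[ℝ] (V × Module.Dual ℝ V)}
    (hJ : IsGCS V J) (x : V × Module.Dual ℝ V) : J (J x) = -x := by
  have := DFunLike.congr_fun hJ.1 x
  simpa using this

end ProofAux


theorem bComplex_iff_blk2_eq_zero_and_betaComplex_iff_blk3_eq_zero
    (V : Type*) [AddCommGroup V] [Module ℝ V] [FiniteDimensional ℝ V]
    (J : (V × Module.Dual ℝ V) →ₗ[ℝ] (V × Module.Dual ℝ V)) (hJ : IsGCS V J) :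
    (IsBComplex V J ↔ blk2 V J = 0) ∧ (IsBetaComplex V J ↔ blk3 V J = 0) := by
  obtain ⟨hsq, hpair⟩ := hJ
  constructor
  · constructor
    · rintro ⟨B, -, J₀, ⟨Jc, -, rfl⟩, rfl⟩
      ext g
      simp [blk2, calB, ofBlocks_apply]
    · intro h2
      have happ : ∀ (v : V) (f : Module.Dual ℝ V),
          J (v, f) = (blk1 V J v, blk3 V J v + blk4 V J f) := by
        intro v f
        rw [J_apply, h2]
        simp
      have hsq' : ∀ x : V × Module.Dual ℝ V, J (J x) = -x :=
        sq_apply ⟨hsq, hpair⟩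
      have hJ1sq : ∀ v : V, blk1 V J (blk1 V J v) = -v := by
        intro v
        have h := hsq' (v, 0)
        rw [happ v 0, map_zero, add_zero, happ] at h
        simpa using congrArg Prod.fst h
      have hanti : ∀ v : V,
          blk3 V J (blk1 V J v) + blk4 V J (blk3 V J v) = 0 := by
        intro v
        have h := hsq' (v, 0)
        rw [happ v 0, map_zero, add_zero, happ] at h
        simpa using congrArg Prod.snd h
      have hpair1 : ∀ (v : V) (g : Module.Dual ℝ V),
          blk4 V J g (blk1 V J v) = g v := by
        intro v g
        have h := hpair (v, 0) (0, g)
        rw [happ v 0, happ 0 g] at h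
        simp only [gcPair, map_zero, add_zero, zero_add,
          LinearMap.zero_apply] at h
        linarith
      have hpair2 : ∀ v w : V,
          blk3 V J v (blk1 V J w) = -(blk3 V J w (blk1 V J v)) := by
        intro v w
        have h := hpair (v, 0) (w, 0)
        rw [happ v 0, happ w 0] at h
        simp only [gcPair, map_zero, add_zero, LinearMap.zero_apply] at h
        linarith
      have hJ4 : ∀ g : Module.Dual ℝ V,
          blk4 V J g = -((blk1 V J).dualMap g) := by
        intro g
        ext w
        have h := hpair1 (blk1 V J w) g
        rw [hJ1sq, map_neg] at h
        simp only [LinearMap.neg_apply, LinearMap.dualMap_apply]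
        linarith
      have hcomm : ∀ (v w : V),
          blk3 V J (blk1 V J v) w = blk3 V J v (blk1 V J w) := by
        intro v w
        have h := DFunLike.congr_fun (hanti v) w
        rw [hJ4 (blk3 V J v)] at h
        simp only [LinearMap.add_apply, LinearMap.neg_apply,
          LinearMap.dualMap_apply, LinearMap.zero_apply] at h
        linarith
      refine ⟨-(1/2 : ℝ) • (blk3 V J ∘ₗ blk1 V J), ?_,
        ofBlocks V (blk1 V J) 0 0 (-(blk1 V J).dualMap),
        ⟨blk1 V J, ?_, rfl⟩, ?_⟩
      · intro u v
        simp only [LinearMap.smul_apply, LinearMap.comp_apply, smul_eq_mul]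
        have h1 := hcomm u v
        have h2' := hpair2 u v
        have h3 := hcomm v u
        rw [h1, h2', ← h3]
        ring
      · ext v
        simp [hJ1sq v]
      · apply LinearMap.ext
        rintro ⟨v, f⟩
        rw [happ]
        simp only [LinearMap.comp_apply, calB, ofBlocks_apply,
          LinearMap.add_apply, LinearMap.id_coe, id_eq, LinearMap.zero_apply,
          LinearMap.neg_apply, zero_add, add_zero, map_zero]
        refine Prod.ext ?_ ?_
        · simp
        · ext w
          simp only [LinearMap.add_apply, LinearMap.neg_apply,
            LinearMap.smul_apply, LinearMap.comp_apply,
            LinearMap.dualMap_apply, map_add, map_neg, map_smul,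
            smul_eq_mul, map_zero, zero_add, add_zero, LinearMap.zero_apply,
            LinearMap.id_coe, id_eq]
          rw [hJ4 f]
          simp only [LinearMap.neg_apply, LinearMap.dualMap_apply]
          have h1 : blk3 V J (blk1 V J (blk1 V J v)) w = -(blk3 V J v w) := by
            rw [hJ1sq v]; simp
          have h2' : blk3 V J (blk1 V J v) (blk1 V J w) = -(blk3 V J v w) := by
            rw [hcomm v (blk1 V J w), hJ1sq w]
            simp
          linarith [h1, h2']
  · constructor
    · rintro ⟨β, -, J₀, ⟨Jc, -, rfl⟩, rfl⟩
      ext v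
      simp [blk3, calBeta, ofBlocks_apply]
    · intro h3
      have happ : ∀ (v : V) (f : Module.Dual ℝ V),
          J (v, f) = (blk1 V J v + blk2 V J f, blk4 V J f) := by
        intro v f
        rw [J_apply, h3]
        simp
      have hsq' : ∀ x : V × Module.Dual ℝ V, J (J x) = -x :=
        sq_apply ⟨hsq, hpair⟩
      have hJ1sq : ∀ v : V, blk1 V J (blk1 V J v) = -v := by
        intro v
        have h := hsq' (v, 0)
        rw [happ v 0, map_zero, add_zero, map_zero, happ] at h
        simpa using congrArg Prod.fst h
      have hanti : ∀ g : Module.Dual ℝ V,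
          blk1 V J (blk2 V J g) + blk2 V J (blk4 V J g) = 0 := by
        intro g
        have h := hsq' (0, g)
        rw [happ 0 g, map_zero, zero_add, happ] at h
        simpa using congrArg Prod.fst h
      have hpair1 : ∀ (v : V) (g : Module.Dual ℝ V),
          blk4 V J g (blk1 V J v) = g v := by
        intro v g
        have h := hpair (v, 0) (0, g)
        rw [happ v 0, happ 0 g] at h
        simp only [gcPair, map_zero, add_zero, zero_add,
          LinearMap.zero_apply] at h
        linarith
      have hpair2 : ∀ f g : Module.Dual ℝ V,
          blk4 V J f (blk2 V J g) = -(blk4 V J g (blk2 V J f)) := by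
        intro f g
        have h := hpair (0, f) (0, g)
        rw [happ 0 f, happ 0 g] at h
        simp only [gcPair, map_zero, zero_add,
          LinearMap.zero_apply] at h
        linarith
      have hJ1sq' : ∀ v : V, blk1 V J (blk1 V J v) = -v := hJ1sq
      have hJ4 : ∀ g : Module.Dual ℝ V,
          blk4 V J g = -((blk1 V J).dualMap g) := by
        intro g
        ext w
        have h := hpair1 (blk1 V J w) g
        rw [hJ1sq, map_neg] at h
        simp only [LinearMap.neg_apply, LinearMap.dualMap_apply]
        linarith
      have hcomm : ∀ g : Module.Dual ℝ V,
          blk2 V J ((blk1 V J).dualMap g) = blk1 V J (blk2 V J g) := by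
        intro g
        have h := hanti g
        rw [hJ4 g, map_neg] at h
        exact (add_neg_eq_zero.mp h).symm
      refine ⟨(1/2 : ℝ) • (blk1 V J ∘ₗ blk2 V J), ?_,
        ofBlocks V (blk1 V J) 0 0 (-(blk1 V J).dualMap),
        ⟨blk1 V J, ?_, rfl⟩, ?_⟩
      · intro f g
        simp only [LinearMap.smul_apply, LinearMap.comp_apply, map_smul,
          smul_eq_mul]
        have h := hpair2 f g
        rw [hJ4 f, hJ4 g] at h
        simp only [LinearMap.neg_apply, LinearMap.dualMap_apply] at h
        linarith
      · ext v
        simp [hJ1sq v]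
      · apply LinearMap.ext
        rintro ⟨v, f⟩
        rw [happ]
        simp only [LinearMap.comp_apply, calBeta, ofBlocks_apply,
          LinearMap.add_apply, LinearMap.id_coe, id_eq, LinearMap.zero_apply,
          LinearMap.neg_apply, zero_add, add_zero, map_zero]
        refine Prod.ext ?_ ?_
        · simp only [LinearMap.smul_apply, LinearMap.comp_apply,
            LinearMap.neg_apply, map_add, map_neg, map_smul, smul_eq_mul,
            LinearMap.dualMap_apply]
          have h1 : blk1 V J (blk1 V J (blk2 V J f)) = -(blk2 V J f) :=
            hJ1sq _
          have h2' : blk1 V J (blk2 V J ((blk1 V J).dualMap f))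
              = -(blk2 V J f) := by
            rw [hcomm f, hJ1sq]
          rw [h1, h2']
          module
        · simp [hJ4 f]
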